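/- Let G be a finite directed graph satisfying (NOC*), (M1*), and (M3*). Then G satisfies (M3**): if D_{i1} and D_{i2} lie in the same quasi-clique in every two-quasi-clique partition of G, and (j1,i1) ∉ E and (j2,i2) ∉ E, then D_{j1} and D_{j2} are adjacent (some directed edge joins them). -/
import Mathlib


/-- A subset of a directed graph is a quasi-clique if every pair of distinct vertices
is joined by an edge in at least one direction. -/
def QuasiClique {V : Type*} (E : V → V → Prop) (C : Set V) : Prop :=
  ∀ ⦃u⦄, u ∈ C → ∀ ⦃v⦄, v ∈ C → u ≠ v → E u v ∨ E v u

/-- `K1, K2` form a two-quasi-clique partition of the vertex set. -/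
def TwoQCPartition {V : Type*} (E : V → V → Prop) (K1 K2 : Set V) : Prop :=
  K1 ∩ K2 = ∅ ∧ K1 ∪ K2 = Set.univ ∧ QuasiClique E K1 ∧ QuasiClique E K2

/-- `u` and `v` lie in different parts of the partition `K1, K2`. -/
def Separated {V : Type*} (K1 K2 : Set V) (u v : V) : Prop :=
  (u ∈ K1 ∧ v ∈ K2) ∨ (u ∈ K2 ∧ v ∈ K1)

/-- `u` and `v` lie in the same part of the partition `K1, K2`. -/
def SameSide {V : Type*} (K1 K2 : Set V) (u v : V) : Prop :=
  (u ∈ K1 ∧ v ∈ K1) ∨ (u ∈ K2 ∧ v ∈ K2)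

lemma part_mem {V : Type*} {E : V → V → Prop} {K1 K2 : Set V}
    (h : TwoQCPartition E K1 K2) (v : V) :
    (v ∈ K1 ∧ v ∉ K2) ∨ (v ∈ K2 ∧ v ∉ K1) := by
  obtain ⟨hd, hu, -, -⟩ := h
  have hv : v ∈ K1 ∪ K2 := hu ▸ Set.mem_univ v
  have hnd : ¬(v ∈ K1 ∧ v ∈ K2) := fun ⟨a, b⟩ =>
    Set.eq_empty_iff_forall_notMem.mp hd v ⟨a, b⟩
  rcases hv with h1 | h2
  · exact Or.inl ⟨h1, fun h2 => hnd ⟨h1, h2⟩⟩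
  · exact Or.inr ⟨h2, fun h1 => hnd ⟨h1, h2⟩⟩

lemma samepart_adj {V : Type*} {E : V → V → Prop} {K1 K2 : Set V}
    (h : TwoQCPartition E K1 K2) {u v : V} (hs : SameSide K1 K2 u v)
    (hne : u ≠ v) : E u v ∨ E v u := by
  obtain ⟨-, -, q1, q2⟩ := h
  rcases hs with ⟨a, b⟩ | ⟨a, b⟩
  · exact q1 a b hne
  · exact q2 a b hne

lemma nonadj_sep {V : Type*} {E : V → V → Prop} {K1 K2 : Set V}
    (h : TwoQCPartition E K1 K2) {u v : V} (hne : u ≠ v)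
    (h1 : ¬ E u v) (h2 : ¬ E v u) : Separated K1 K2 u v := by
  rcases part_mem h u with ⟨u1, u2⟩ | ⟨u1, u2⟩ <;>
    rcases part_mem h v with ⟨v1, v2⟩ | ⟨v1, v2⟩
  · exact absurd (h.2.2.1 u1 v1 hne) (by tauto)
  · exact Or.inl ⟨u1, v1⟩
  · exact Or.inr ⟨u1, v1⟩
  · exact absurd (h.2.2.2 u1 v1 hne) (by tauto)

lemma j_same {V : Type*} {E : V → V → Prop} {K1 K2 : Set V}
    (h : TwoQCPartition E K1 K2) {i1 i2 j1 j2 : V}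
    (h1 : Separated K1 K2 i1 j1) (hs : SameSide K1 K2 i1 i2)
    (h2 : Separated K1 K2 i2 j2) : SameSide K1 K2 j1 j2 := by
  have p1 := part_mem h i1
  have p2 := part_mem h i2
  have p3 := part_mem h j1
  have p4 := part_mem h j2
  unfold Separated SameSide at *
  tauto

/-- (NOC*), (M1*) and (M3*) imply (M3**). -/
theorem NOCs_M1s_M3s_imply_M3ss {V : Type*} [Fintype V]
    (E : V → V → Prop) (hirr : ∀ v, ¬ E v v)
    (hNOC : ∃ K1 K2 : Set V, TwoQCPartition E K1 K2)
    (hM1s : ∀ i j : V, E i j → ¬ E j i →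
      ∃ K1 K2 : Set V, TwoQCPartition E K1 K2 ∧ Separated K1 K2 i j)
    (hM3s : ∀ i1 i2 j1 j2 : V,
      (∀ K1 K2 : Set V, TwoQCPartition E K1 K2 → SameSide K1 K2 i1 i2) →
      E i1 j1 → ¬ E j1 i1 → E i2 j2 → ¬ E j2 i2 →
      (j1 = j2 ∨ E j1 j2 ∨ E j2 j1)) :
    ∀ i1 i2 j1 j2 : V,
      (∀ K1 K2 : Set V, TwoQCPartition E K1 K2 → SameSide K1 K2 i1 i2) →
      i1 ≠ j1 → ¬ E j1 i1 → i2 ≠ j2 → ¬ E j2 i2 →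
      (j1 = j2 ∨ E j1 j2 ∨ E j2 j1) := by
  intro i1 i2 j1 j2 hsame hne1 hj1 hne2 hj2
  by_cases e1 : E i1 j1
  · by_cases e2 : E i2 j2
    · exact hM3s i1 i2 j1 j2 hsame e1 hj1 e2 hj2
    · obtain ⟨K1, K2, hP, hsep⟩ := hM1s i1 j1 e1 hj1
      have hsep2 := nonadj_sep hP hne2 e2 hj2
      have hjj := j_same hP hsep (hsame K1 K2 hP) hsep2
      by_cases hje : j1 = j2
      · exact Or.inl hje
      · exact Or.inr (samepart_adj hP hjj hje)
  · by_cases e2 : E i2 j2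
    · obtain ⟨K1, K2, hP, hsep⟩ := hM1s i2 j2 e2 hj2
      have hsep1 := nonadj_sep hP hne1 e1 hj1
      have hjj := j_same hP hsep1 (hsame K1 K2 hP) hsep
      by_cases hje : j1 = j2
      · exact Or.inl hje
      · exact Or.inr (samepart_adj hP hjj hje)
    · obtain ⟨K1, K2, hP⟩ := hNOC
      have hsep1 := nonadj_sep hP hne1 e1 hj1
      have hsep2 := nonadj_sep hP hne2 e2 hj2
      have hjj := j_same hP hsep1 (hsame K1 K2 hP) hsep2
      by_cases hje : j1 = j2
      · exact Or.inl hje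
      · exact Or.inr (samepart_adj hP hjj hje)
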